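/- arXiv:1706.05352 — 3 statements merged into one kernel-verified Lean document; each statement's English description precedes it below -/
import Mathlib

section
/- Let f and g be polynomials over a field, with deg f = d ≥ 2, and suppose g ∘ f^k = f^k ∘ g for some k ≥ 1. Let ψ : K → ℝ be a function satisfying ψ ∘ f = d·ψ and ψ ∘ g = deg(g)·ψ + O(1) (i.e., there is a constant C with |ψ(g(x)) − deg(g)ψ(x)| ≤ C for all x). Then ψ ∘ g = deg(g)·ψ exactly, i.e., ψ(g(x)) = deg(g)·ψ(x) for all x ∈ K. -/
/-!
Iterating the commutation relation, `ψ(g(F^n x)) - deg g · ψ(F^n x) = D^n (ψ(g x) - deg g · ψ x)`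
for `F = f^k` and `D = d^k > 1`. The left side is bounded by `C` for every `n`, so the defect at
`x` must vanish.
-/

open Polynomial

/-- The `k`-fold iterate `f^k` of a polynomial under composition (`f^0 = X`). -/
noncomputable def polyIter {K : Type*} [CommRing K] (f : Polynomial K) : ℕ → Polynomial K
  | 0 => Polynomial.X
  | n + 1 => f.comp (polyIter f n)

theorem polyIter_eq_comp_iterate {K : Type*} [CommRing K] (f : K[X]) (n : ℕ) :
    polyIter f n = f.comp^[n] X := by
  induction n with
  | zero => rfl
  | succ n ih => rw [Function.iterate_succ_apply', ← ih, polyIter]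

theorem eval_polyIter {K : Type*} [CommRing K] (f : K[X]) (n : ℕ) (x : K) :
    (polyIter f n).eval x = (fun y => f.eval y)^[n] x := by
  rw [polyIter_eq_comp_iterate, iterate_comp_eval, eval_X]

theorem Polynomial.commute_eval_of_comp_eq {R : Type*} [CommSemiring R] {p q : R[X]}
    (h : p.comp q = q.comp p) : Function.Commute (fun x => p.eval x) (fun x => q.eval x) :=
  fun x => by simpa only [eval_comp] using congrArg (eval x) h

theorem eq_zero_of_forall_pow_mul_le {𝕜 : Type*} [Field 𝕜] [LinearOrder 𝕜]
    [IsStrictOrderedRing 𝕜] [Archimedean 𝕜] {D t C : 𝕜} (hD : 1 < D) (ht : 0 ≤ t)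
    (h : ∀ n : ℕ, D ^ n * t ≤ C) : t = 0 := by
  by_contra ht0
  have htpos : 0 < t := lt_of_le_of_ne ht (Ne.symm ht0)
  obtain ⟨n, hn⟩ := pow_unbounded_of_one_lt (C / t) hD
  exact absurd ((le_div_iff₀ htpos).mpr (h n)) (not_le.mpr hn)

theorem Function.Semiconj.eq_mul_of_abs_sub_mul_le {α : Type*} {F G : α → α} {ψ : α → ℝ}
    {D c C : ℝ} (hD : 1 < D) (hψ : Function.Semiconj ψ F (D * ·)) (hFG : Function.Commute F G)
    (hC : ∀ x, |ψ (G x) - c * ψ x| ≤ C) (x : α) : ψ (G x) = c * ψ x := by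
  have hψn (n : ℕ) (y : α) : ψ (F^[n] y) = D ^ n * ψ y := by
    rw [(hψ.iterate_right n).eq, mul_left_iterate_apply]
  have hdefect (n : ℕ) : D ^ n * |ψ (G x) - c * ψ x| ≤ C := by
    calc D ^ n * |ψ (G x) - c * ψ x|
        = |ψ (G (F^[n] x)) - c * ψ (F^[n] x)| := by
          rw [← (hFG.iterate_left n).eq, hψn, hψn, ← mul_left_comm, ← mul_sub, abs_mul,
            abs_of_pos (pow_pos (zero_lt_one.trans hD) n)]
      _ ≤ C := hC _
  exact sub_eq_zero.mp (abs_eq_zero.mp (eq_zero_of_forall_pow_mul_le hD (abs_nonneg _) hdefect))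

theorem psi_comp_commuting_exact_general {K : Type*} [Field K] (f g : Polynomial K) (d : ℕ)
    (hd : 2 ≤ d) (k : ℕ) (hk : 1 ≤ k)
    (hcomm : g.comp (polyIter f k) = (polyIter f k).comp g)
    (ψ : K → ℝ) (hψf : ∀ x : K, ψ (f.eval x) = (d : ℝ) * ψ x)
    (C : ℝ) (hC : ∀ x : K, |ψ (g.eval x) - (g.natDegree : ℝ) * ψ x| ≤ C) :
    ∀ x : K, ψ (g.eval x) = (g.natDegree : ℝ) * ψ x := by
  have hD : 1 < (d : ℝ) ^ k :=
    one_lt_pow₀ (by exact_mod_cast (by omega : 1 < d)) (by omega)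
  have hψF : Function.Semiconj ψ (fun x => (polyIter f k).eval x) ((d : ℝ) ^ k * ·) := by
    have hψf' : Function.Semiconj ψ (fun x => f.eval x) ((d : ℝ) * ·) := hψf
    simpa only [funext (eval_polyIter f k), mul_left_iterate] using hψf'.iterate_right k
  exact hψF.eq_mul_of_abs_sub_mul_le hD (commute_eval_of_comp_eq hcomm).symm hC

/-- if `g ∘ f^k = f^k ∘ g` and `ψ ∘ f = d·ψ`, `ψ ∘ g = deg(g)·ψ + O(1)`,
then `ψ ∘ g = deg(g)·ψ` exactly. -/
theorem psi_comp_commuting_exact {K : Type*} [Field K] (f g : Polynomial K) (d : ℕ)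
    (hdeg : f.natDegree = d) (hd : 2 ≤ d) (k : ℕ) (hk : 1 ≤ k)
    (hcomm : g.comp (polyIter f k) = (polyIter f k).comp g)
    (ψ : K → ℝ) (hψf : ∀ x : K, ψ (f.eval x) = (d : ℝ) * ψ x)
    (C : ℝ) (hC : ∀ x : K, |ψ (g.eval x) - (g.natDegree : ℝ) * ψ x| ≤ C) :
    ∀ x : K, ψ (g.eval x) = (g.natDegree : ℝ) * ψ x :=
  psi_comp_commuting_exact_general f g d hd k hk hcomm ψ hψf C hC
end

section
/- Let K be a number field with standard normalized absolute values, and let c₁, …, c_{d−1} ∈ K with d ≥ 3 satisfy c₁c₂⋯c_{d−1} = (−1)^{d−1}λ for some λ ∈ K^×. For each place v write n_v = [K_v:ℚ_v]/[K:ℚ] and ‖c‖_v = max_i |c_i|_v. Let S = { v : 5 log|c₁|_v < log‖c‖_v }. Then ∑_{v∈S} n_v log⁺‖c‖_v ≥ (1/(5d−9)) h(c) − ((5d−4)/(5d−9)) h(λ), where h(c) = ∑_{v} n_v log⁺‖c‖_v is the standard Weil height of the point (c₁,…,c_{d−1}) ∈ 𝔸^{d−1}(K) and h(λ) is the Weil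 height of λ. -/
/-! Write `L_v = log ‖c‖_v` and `a_v = log |c₁|_v`. From `∏ cᵢ = ±λ` one gets, at every place,
`|c₁|_v⁻¹ ≤ |λ⁻¹|_v ‖c‖_v^(d-2)` and `log⁺ ‖c‖_v⁻¹ ≤ log⁺ |λ⁻¹|_v`; off `S` moreover `L_v ≤ 5 a_v`.
Together they give the pointwise bound
`log⁺ ‖c‖_v ≤ 1_S(v) (5d-9) log⁺ ‖c‖_v + 5 a_v + 5 log⁺ |λ⁻¹|_v`.
Summing with the weights `n_v`, the product formula kills `∑ n_v a_v` and turns `h(λ⁻¹)` into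
`h(λ)`, so `h(c) ≤ (5d-9) ∑_{v∈S} n_v log⁺ ‖c‖_v + 5 h(λ)`. -/

open Real Finset

section Pointwise

variable {ι : Type*} [Fintype ι] [Nonempty ι] {x : ι → ℝ}

lemma prod_le_sup'_pow (hx : ∀ i, 0 ≤ x i) (s : Finset ι) :
    ∏ i ∈ s, x i ≤ univ.sup' univ_nonempty x ^ #s := by
  rw [← prod_const]
  exact prod_le_prod (fun i _ => hx i) fun i _ => le_sup' x (mem_univ i)

lemma posLog_inv_sup'_le_posLog_inv_prod (hx : ∀ i, 0 < x i) :
    log⁺ (univ.sup' univ_nonempty x)⁻¹ ≤ log⁺ (∏ i, x i)⁻¹ := by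
  set N := univ.sup' univ_nonempty x
  have hN : 0 < N := (hx (Classical.arbitrary ι)).trans_le (le_sup' x (mem_univ _))
  rcases le_or_gt 1 N with h1 | h1
  · rw [(posLog_eq_zero_iff _).2 (by rw [abs_inv, abs_of_pos hN]; exact inv_le_one_of_one_le₀ h1)]
    exact posLog_nonneg
  · have hprod : ∏ i, x i ≤ N := (prod_le_sup'_pow (fun i => (hx i).le) univ).trans
      (pow_le_of_le_one hN.le h1.le (card_ne_zero.2 univ_nonempty))
    exact posLog_le_posLog (inv_nonneg.2 hN.le)
      (inv_anti₀ (prod_pos fun i _ => hx i) hprod)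

lemma neg_log_le_posLog_inv_prod_add (hx : ∀ i, 0 < x i) (j : ι) :
    -log (x j) ≤
      log⁺ (∏ i, x i)⁻¹ + (Fintype.card ι - 1 : ℝ) * log⁺ (univ.sup' univ_nonempty x) := by
  classical
  have hrest : 0 < ∏ i ∈ univ.erase j, x i := prod_pos fun i _ => hx i
  have hsplit : log (∏ i, x i) = log (x j) + log (∏ i ∈ univ.erase j, x i) := by
    rw [← mul_prod_erase univ x (mem_univ j), log_mul (hx j).ne' hrest.ne']
  have hcard : ((#(univ.erase j) : ℕ) : ℝ) = Fintype.card ι - 1 := by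
    rw [card_erase_of_mem (mem_univ j), card_univ, Nat.cast_pred Fintype.card_pos]
  have hrest_le : log (∏ i ∈ univ.erase j, x i) ≤
      (Fintype.card ι - 1 : ℝ) * log⁺ (univ.sup' univ_nonempty x) := by
    rw [← hcard, ← posLog_pow]
    exact (le_max_right _ _).trans
      (posLog_le_posLog hrest.le (prod_le_sup'_pow (fun i => (hx i).le) _))
  have hinv : -log (∏ i, x i) ≤ log⁺ (∏ i, x i)⁻¹ := by
    rw [← log_inv]; exact le_max_right _ _
  linarith

/-- If `5 log x_j < log N`, the coefficient `5n - 4` absorbs `-5 log x_j` by the previous lemma;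
otherwise `log⁺ N = log N + log⁺ N⁻¹ ≤ 5 log x_j + log⁺ (∏ x)⁻¹`. -/
lemma posLog_sup'_le (hx : ∀ i, 0 < x i) (j : ι) :
    log⁺ (univ.sup' univ_nonempty x) ≤
      (if 5 * log (x j) < log (univ.sup' univ_nonempty x) then
        (5 * Fintype.card ι - 4) * log⁺ (univ.sup' univ_nonempty x) else 0) +
      5 * log (x j) + 5 * log⁺ (∏ i, x i)⁻¹ := by
  set N := univ.sup' univ_nonempty x
  have hlow := neg_log_le_posLog_inv_prod_add hx j
  have hinv := posLog_inv_sup'_le_posLog_inv_prod hx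
  have hpos : 0 ≤ log⁺ (∏ i, x i)⁻¹ := posLog_nonneg
  have hsplit := posLog_sub_posLog_inv (x := N)
  split_ifs <;> linarith

end Pointwise

section Places

variable {K V : Type*} [Field K] (av : V → AbsoluteValue K ℝ) (nv : V → ℝ)

def maxAbs {ι : Type*} [Fintype ι] [Nonempty ι] (w : AbsoluteValue K ℝ) (c : ι → K) : ℝ :=
  univ.sup' univ_nonempty fun i => w (c i)

lemma support_mul_comp_subset {g : V → ℝ} {φ : ℝ → ℝ} (hφ : φ 1 = 0) :
    Function.support (fun v => nv v * φ (g v)) ⊆ {v | g v ≠ 1} :=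
  Function.support_subset_iff'.2 fun v hv => by simp [not_not.1 hv, hφ]

lemma finsum_posLog_inv (hfin : ∀ x : K, x ≠ 0 → {v | av v x ≠ 1}.Finite)
    (hprod : ∀ x : K, x ≠ 0 → ∑ᶠ v, nv v * log (av v x) = 0) {x : K} (hx : x ≠ 0) :
    ∑ᶠ v, nv v * log⁺ (av v x⁻¹) = ∑ᶠ v, nv v * log⁺ (av v x) := by
  have hsub : ∀ v, nv v * log⁺ (av v x⁻¹) = nv v * log⁺ (av v x) - nv v * log (av v x) := by
    intro v
    rw [map_inv₀, ← mul_sub, ← posLog_sub_posLog_inv, sub_sub_cancel]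
  rw [finsum_congr hsub, finsum_sub_distrib, hprod x hx, sub_zero]
  · exact (hfin x hx).subset (support_mul_comp_subset nv posLog_one)
  · exact (hfin x hx).subset (support_mul_comp_subset nv log_one)

variable {av nv}

theorem finsum_posLog_maxAbs_le (hfin : ∀ x : K, x ≠ 0 → {v | av v x ≠ 1}.Finite)
    (hprod : ∀ x : K, x ≠ 0 → ∑ᶠ v, nv v * log (av v x) = 0) (hnv : ∀ v, 0 ≤ nv v)
    {ι : Type*} [Fintype ι] [Nonempty ι] {c : ι → K} (hc : ∀ i, c i ≠ 0) (j : ι) :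
    ∑ᶠ v, nv v * log⁺ (maxAbs (av v) c) ≤
      (5 * Fintype.card ι - 4) *
        ∑ᶠ v ∈ {v | 5 * log (av v (c j)) < log (maxAbs (av v) c)}, nv v * log⁺ (maxAbs (av v) c) +
      5 * ∑ᶠ v, nv v * log⁺ (av v (∏ i, c i)) := by
  set S := {v | 5 * log (av v (c j)) < log (maxAbs (av v) c)}
  obtain ⟨F, hF⟩ : ∃ F : Finset V, ∀ v ∉ F, ∀ i, av v (c i) = 1 :=
    ⟨(Set.finite_iUnion fun i => hfin _ (hc i)).toFinset, fun v hv => by simpa using hv⟩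
  have hmax : ∀ v ∉ F, maxAbs (av v) c = 1 := fun v hv => by
    simp only [maxAbs, hF v hv, sup'_const]
  have hprod_inv : ∀ v ∉ F, av v (∏ i, c i)⁻¹ = 1 := fun v hv => by
    simp [map_prod, hF v hv]
  have hsuppN : Function.support (fun v => nv v * log⁺ (maxAbs (av v) c)) ⊆ F :=
    (support_mul_comp_subset nv posLog_one).trans fun v => not_imp_comm.1 (hmax v)
  calc ∑ᶠ v, nv v * log⁺ (maxAbs (av v) c)
      = ∑ v ∈ F, nv v * log⁺ (maxAbs (av v) c) := finsum_eq_sum_of_support_subset _ hsuppN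
    _ ≤ ∑ v ∈ F, ((5 * Fintype.card ι - 4) * S.indicator (fun v => nv v * log⁺ (maxAbs (av v) c)) v
          + 5 * (nv v * log (av v (c j))) + 5 * (nv v * log⁺ (av v (∏ i, c i)⁻¹))) := by
        refine sum_le_sum fun v _ => ?_
        have h := mul_le_mul_of_nonneg_left
          (posLog_sup'_le (fun i => (av v).pos (hc i)) j) (hnv v)
        rw [← map_prod, ← map_inv₀] at h
        change nv v * log⁺ (maxAbs (av v) c) ≤
          nv v * ((if v ∈ S then _ * log⁺ (maxAbs (av v) c) else 0) + _ + _) at h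
        rw [Set.indicator_apply]
        split_ifs at h ⊢ <;> linarith
    _ = _ := by
        have hsuppS : Function.support (S.indicator fun v => nv v * log⁺ (maxAbs (av v) c)) ⊆ F :=
          Set.support_indicator.trans_subset (Set.inter_subset_right.trans hsuppN)
        have hsuppj : Function.support (fun v => nv v * log (av v (c j))) ⊆ F :=
          (support_mul_comp_subset nv log_one).trans fun v => not_imp_comm.1 fun hv => hF v hv j
        have hsuppP : Function.support (fun v => nv v * log⁺ (av v (∏ i, c i)⁻¹)) ⊆ F :=
          (support_mul_comp_subset nv posLog_one).trans fun v => not_imp_comm.1 (hprod_inv v)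
        rw [sum_add_distrib, sum_add_distrib, ← mul_sum, ← mul_sum, ← mul_sum,
          ← finsum_eq_sum_of_support_subset _ hsuppS, ← finsum_eq_sum_of_support_subset _ hsuppj,
          ← finsum_eq_sum_of_support_subset _ hsuppP, ← finsum_mem_def, hprod _ (hc j),
          finsum_posLog_inv av nv hfin hprod (prod_ne_zero_iff.2 fun i _ => hc i)]
        ring

end Places

/-- for a number field `K` (modelled by a family of normalized absolute values
`av v` with weights `nv v` satisfying the product formula), if `c₁⋯c_{d−1} = (−1)^{d−1}λ`
with `λ ≠ 0`, and `S = {v : 5 log|c₁|_v < log‖c‖_v}`, then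
`∑_{v∈S} n_v log⁺‖c‖_v ≥ (1/(5d−9)) h(c) − ((5d−4)/(5d−9)) h(λ)`. -/
theorem places_in_S_carry_height {K : Type*} [Field K] {V : Type*}
    (av : V → AbsoluteValue K ℝ) (nv : V → ℝ) (hnv : ∀ v, 0 < nv v)
    (hfin : ∀ x : K, x ≠ 0 → {v | av v x ≠ 1}.Finite)
    (hprod : ∀ x : K, x ≠ 0 → ∑ᶠ v, nv v * Real.log (av v x) = 0)
    (d : ℕ) (hd : 3 ≤ d) (c : Fin (d - 1) → K) (lam : K) (hlam : lam ≠ 0)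
    (hrel : ∏ i, c i = (-1) ^ (d - 1) * lam)
    (cnorm : V → ℝ)
    (hcnorm : ∀ v, cnorm v = Finset.univ.sup'
      (Finset.univ_nonempty_iff.mpr ⟨(⟨0, by omega⟩ : Fin (d - 1))⟩) (fun i => av v (c i)))
    (S : Set V) (hS : S = {v | 5 * Real.log (av v (c ⟨0, by omega⟩)) < Real.log (cnorm v)}) :
    ∑ᶠ v ∈ S, nv v * max 0 (Real.log (cnorm v)) ≥
      (1 / (5 * (d : ℝ) - 9)) * (∑ᶠ v, nv v * max 0 (Real.log (cnorm v))) -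
        ((5 * (d : ℝ) - 4) / (5 * (d : ℝ) - 9)) *
          (∑ᶠ v, nv v * max 0 (Real.log (av v lam))) := by
  have : NeZero (d - 1) := ⟨by omega⟩
  have hc : ∀ i, c i ≠ 0 := fun i hi => hlam <| by
    simpa [prod_eq_zero (mem_univ i) hi] using hrel.symm
  have habs : ∀ v, av v (∏ i, c i) = av v lam := fun v => by simp [hrel]
  obtain rfl : cnorm = fun v => maxAbs (av v) c := funext hcnorm
  subst hS
  have key := finsum_posLog_maxAbs_le hfin hprod (fun v => (hnv v).le) hc ⟨0, by omega⟩
  simp only [habs, Fintype.card_fin, Nat.cast_sub (by omega : 1 ≤ d), Nat.cast_one] at key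
  have hD : (0 : ℝ) < 5 * d - 9 := by
    have : (3 : ℝ) ≤ d := by exact_mod_cast hd
    linarith
  have hlam_height : 0 ≤ ∑ᶠ v, nv v * log⁺ (av v lam) :=
    finsum_nonneg fun v => mul_nonneg (hnv v).le posLog_nonneg
  simp only [← posLog_apply]
  rw [ge_iff_le, div_mul_eq_mul_div, div_mul_eq_mul_div, one_mul, div_sub_div_same, div_le_iff₀ hD]
  linarith [mul_nonneg hD.le hlam_height]
end

section
/- Let f_a(z) = z + a + 1/z, viewed as a rational map over the function field ℚ(a). For every n ≥ 1, the rational function f_a^n(1) ∈ ℚ(a) (the n-th iterate of f_a evaluated at the critical point z = 1), regarded as a rational function of the parameter a, has degree 2^{n−1} in a. The same holds for f_a^n(−1). -/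
/-!
Write the orbit of the parameter-dependent critical value `f(±1) = a ± 2` as reduced fractions
`p / q` of polynomials in `a`. One step of `z ↦ z + a + z⁻¹` sends `p / q` to
`(p (p + a q) + q²) / (p q)`, which is again reduced. If `deg q = deg p - 1` and both leading
coefficients are positive, nothing cancels in the top degree `2 deg p` of the new numerator, so
the degree of the numerator doubles while the denominator stays one degree lower.
-/

open Polynomial

theorem IsCoprime.mul_add_mul_add_mul_self {R : Type*} [CommRing R] {p q : R}
    (h : IsCoprime p q) (t : R) : IsCoprime (p * (p + t * q) + q * q) (p * q) := by
  refine IsCoprime.mul_right ?_ ?_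
  · have hp : IsCoprime (q * q + p * (p + t * q)) p :=
      (h.symm.mul_left h.symm).add_mul_left_left _
    rwa [add_comm] at hp
  · have hq : IsCoprime (p * p + q * (t * p + q)) q := (h.mul_left h).add_mul_left_left _
    convert hq using 1
    ring

namespace RatFunc

variable {K : Type*} [Field K]

theorem associated_num_div_of_isCoprime {p q : K[X]} (hq : q ≠ 0) (h : IsCoprime p q) :
    Associated (num (algebraMap K[X] (RatFunc K) p / algebraMap K[X] (RatFunc K) q)) p ∧
      Associated (denom (algebraMap K[X] (RatFunc K) p / algebraMap K[X] (RatFunc K) q)) q := by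
  set x : RatFunc K := algebraMap K[X] (RatFunc K) p / algebraMap K[X] (RatFunc K) q
  have hx : x.num * q = p * x.denom := (num_mul_eq_mul_denom_iff hq).mpr rfl
  have hx' : p * x.denom = x.num * q := hx.symm
  have hnd := isCoprime_num_denom x
  exact ⟨associated_of_dvd_dvd (hnd.dvd_of_dvd_mul_right ⟨q, hx'⟩)
      (h.dvd_of_dvd_mul_right ⟨x.denom, hx⟩),
    associated_of_dvd_dvd (hnd.symm.dvd_of_dvd_mul_left ⟨p, hx.trans (mul_comm _ _)⟩)
      (h.symm.dvd_of_dvd_mul_left ⟨x.num, hx'.trans (mul_comm _ _)⟩)⟩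

theorem natDegree_num_div_of_isCoprime {p q : K[X]} (hq : q ≠ 0) (h : IsCoprime p q) :
    (num (algebraMap K[X] (RatFunc K) p / algebraMap K[X] (RatFunc K) q)).natDegree =
        p.natDegree ∧
      (denom (algebraMap K[X] (RatFunc K) p / algebraMap K[X] (RatFunc K) q)).natDegree =
        q.natDegree :=
  have hpq := associated_num_div_of_isCoprime hq h
  ⟨natDegree_eq_of_degree_eq (degree_eq_degree_of_associated hpq.1),
    natDegree_eq_of_degree_eq (degree_eq_degree_of_associated hpq.2)⟩

theorem div_add_X_add_inv {p q : K[X]} (hp : p ≠ 0) (hq : q ≠ 0) :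
    algebraMap K[X] (RatFunc K) p / algebraMap K[X] (RatFunc K) q + X +
        (algebraMap K[X] (RatFunc K) p / algebraMap K[X] (RatFunc K) q)⁻¹ =
      algebraMap K[X] (RatFunc K) (p * (p + Polynomial.X * q) + q * q) /
        algebraMap K[X] (RatFunc K) (p * q) := by
  have hp' : algebraMap K[X] (RatFunc K) p ≠ 0 := algebraMap_ne_zero hp
  have hq' : algebraMap K[X] (RatFunc K) q ≠ 0 := algebraMap_ne_zero hq
  rw [← algebraMap_X]
  field_simp
  simp only [map_add, map_mul]
  ring

end RatFunc

namespace Polynomial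

variable {K : Type*} [Field K] [LinearOrder K]

structure IsOrbitFraction (p q : K[X]) : Prop where
  isCoprime : IsCoprime p q
  leadingCoeff_num_pos : 0 < p.leadingCoeff
  leadingCoeff_den_pos : 0 < q.leadingCoeff
  natDegree_den_succ : q.natDegree + 1 = p.natDegree

namespace IsOrbitFraction

variable {p q : K[X]}

theorem num_ne_zero (h : IsOrbitFraction p q) : p ≠ 0 :=
  leadingCoeff_ne_zero.mp h.leadingCoeff_num_pos.ne'

theorem den_ne_zero (h : IsOrbitFraction p q) : q ≠ 0 :=
  leadingCoeff_ne_zero.mp h.leadingCoeff_den_pos.ne'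

variable [IsStrictOrderedRing K]

theorem natDegree_leadingCoeff_add_X_mul (h : IsOrbitFraction p q) :
    (p + X * q).natDegree = p.natDegree ∧
      (p + X * q).leadingCoeff = p.leadingCoeff + q.leadingCoeff := by
  have hXq : (X * q).natDegree = p.natDegree := by
    rw [natDegree_X_mul h.den_ne_zero, h.natDegree_den_succ]
  have hlc : p.leadingCoeff + (X * q).leadingCoeff = p.leadingCoeff + q.leadingCoeff := by
    rw [leadingCoeff_mul, leadingCoeff_X, one_mul]
  have hne : p.leadingCoeff + (X * q).leadingCoeff ≠ 0 := by
    rw [hlc]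
    exact (add_pos h.leadingCoeff_num_pos h.leadingCoeff_den_pos).ne'
  have hdeg : p.degree = (X * q).degree := by
    rw [degree_eq_natDegree h.num_ne_zero,
      degree_eq_natDegree (mul_ne_zero X_ne_zero h.den_ne_zero), hXq]
  refine ⟨natDegree_eq_of_degree_eq ?_, (leadingCoeff_add_of_degree_eq hdeg hne).trans hlc⟩
  rw [degree_add_eq_of_leadingCoeff_add_ne_zero hne, ← hdeg, max_self]

theorem natDegree_leadingCoeff_step (h : IsOrbitFraction p q) :
    (p * (p + X * q) + q * q).natDegree = 2 * p.natDegree ∧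
      0 < (p * (p + X * q) + q * q).leadingCoeff := by
  obtain ⟨hdeg, hlc⟩ := h.natDegree_leadingCoeff_add_X_mul
  have hs : 0 < (p + X * q).leadingCoeff :=
    hlc ▸ add_pos h.leadingCoeff_num_pos h.leadingCoeff_den_pos
  have hps : (p * (p + X * q)).natDegree = 2 * p.natDegree := by
    rw [natDegree_mul h.num_ne_zero (leadingCoeff_ne_zero.mp hs.ne'), hdeg, two_mul]
  have hqq : (q * q).natDegree < (p * (p + X * q)).natDegree := by
    rw [hps, natDegree_mul h.den_ne_zero h.den_ne_zero]
    have := h.natDegree_den_succ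
    omega
  refine ⟨(natDegree_add_eq_left_of_natDegree_lt hqq).trans hps, ?_⟩
  rw [leadingCoeff_add_of_degree_lt' (degree_lt_degree hqq), leadingCoeff_mul]
  exact mul_pos h.leadingCoeff_num_pos hs

theorem step (h : IsOrbitFraction p q) :
    IsOrbitFraction (p * (p + X * q) + q * q) (p * q) where
  isCoprime := h.isCoprime.mul_add_mul_add_mul_self X
  leadingCoeff_num_pos := h.natDegree_leadingCoeff_step.2
  leadingCoeff_den_pos := by
    rw [leadingCoeff_mul]
    exact mul_pos h.leadingCoeff_num_pos h.leadingCoeff_den_pos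
  natDegree_den_succ := by
    rw [h.natDegree_leadingCoeff_step.1, natDegree_mul h.num_ne_zero h.den_ne_zero]
    have := h.natDegree_den_succ
    omega

end IsOrbitFraction

end Polynomial

section Orbit

variable {K : Type*} [Field K] [LinearOrder K] [IsStrictOrderedRing K]

theorem exists_iterate_X_add_C_eq_div (φ : RatFunc K → RatFunc K)
    (hφ : ∀ z : RatFunc K, φ z = z + RatFunc.X + z⁻¹) (c : K) (m : ℕ) :
    ∃ p q : K[X], IsOrbitFraction p q ∧ p.natDegree = 2 ^ m ∧
      φ^[m] (algebraMap K[X] (RatFunc K) (X + C c)) =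
        algebraMap K[X] (RatFunc K) p / algebraMap K[X] (RatFunc K) q := by
  induction m with
  | zero => exact ⟨X + C c, 1, ⟨isCoprime_one_right, by simp, by simp, by simp⟩, by simp, by simp⟩
  | succ m ih =>
    obtain ⟨p, q, h, hdeg, hpq⟩ := ih
    refine ⟨_, _, h.step, ?_, ?_⟩
    · rw [h.natDegree_leadingCoeff_step.1, hdeg, pow_succ, mul_comm]
    · rw [Function.iterate_succ_apply', hpq, hφ,
        RatFunc.div_add_X_add_inv h.num_ne_zero h.den_ne_zero]

theorem max_natDegree_num_denom_iterate_X_add_C (φ : RatFunc K → RatFunc K)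
    (hφ : ∀ z : RatFunc K, φ z = z + RatFunc.X + z⁻¹) (c : K) (m : ℕ) :
    max (φ^[m] (algebraMap K[X] (RatFunc K) (X + C c))).num.natDegree
      (φ^[m] (algebraMap K[X] (RatFunc K) (X + C c))).denom.natDegree = 2 ^ m := by
  obtain ⟨p, q, h, hdeg, hpq⟩ := exists_iterate_X_add_C_eq_div φ hφ c m
  obtain ⟨hnum, hden⟩ := RatFunc.natDegree_num_div_of_isCoprime h.den_ne_zero h.isCoprime
  rw [hpq, hnum, hden, max_eq_left (h.natDegree_den_succ ▸ Nat.le_succ _), hdeg]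

end Orbit

/-- for `f_a(z) = z + a + 1/z` over `ℚ(a)`, the `n`-th iterate of the critical
points `z = ±1` is, as a rational function of the parameter `a`, of degree `2^{n−1}`
(degree of a rational function = max of the degrees of numerator and denominator). -/
theorem iterate_of_critical_point_degree
    (φ : RatFunc ℚ → RatFunc ℚ)
    (hφ : ∀ z : RatFunc ℚ, φ z = z + RatFunc.X + z⁻¹) :
    ∀ n : ℕ, 1 ≤ n →
      max ((φ^[n] 1).num.natDegree) ((φ^[n] 1).denom.natDegree) = 2 ^ (n - 1) ∧
        max ((φ^[n] (-1)).num.natDegree) ((φ^[n] (-1)).denom.natDegree) = 2 ^ (n - 1) := by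
  intro n hn
  obtain ⟨m, rfl⟩ : ∃ m, n = m + 1 := ⟨n - 1, by omega⟩
  have hφ_one : φ 1 = algebraMap ℚ[X] (RatFunc ℚ) (X + C 2) := by
    rw [hφ, inv_one, map_add, RatFunc.algebraMap_X, RatFunc.algebraMap_C, map_ofNat]
    ring
  have hφ_neg_one : φ (-1) = algebraMap ℚ[X] (RatFunc ℚ) (X + C (-2)) := by
    rw [hφ, inv_neg, inv_one, map_add, RatFunc.algebraMap_X, RatFunc.algebraMap_C, map_neg,
      map_ofNat]
    ring
  rw [Function.iterate_succ_apply, Function.iterate_succ_apply, hφ_one, hφ_neg_one,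
    Nat.add_sub_cancel]
  exact ⟨max_natDegree_num_denom_iterate_X_add_C φ hφ 2 m,
    max_natDegree_num_denom_iterate_X_add_C φ hφ (-2) m⟩
end
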